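/- Suppose f has pure type q_x + ρ_m h + q_μ where q_x = Σ_i α_i x_i (with α_i coefficients independent of the x-variables) and q_μ does not involve the x-variables. Let w = s_{i_1}···s_{i_ℓ} be any word in simple transpositions, and apply the normalized operators C̄_{i_k}^{ν_k} successively with the admissibility choice ν_k determined by the purity condition (the normalized operator subtracts h·ν from the type compared to the unnormalized one). Then the resulting type equals w(q_x) + ρ_m h + q_μ - φ_w(q_x)·h, where φ_w(Σ α_i x_i) = Σ_{i<j, w(i)>w(j)} (α_i - α_j); in particular the type depends only on the permutation w, not on the word. -/

import Mathlib

open Finset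

/-- The simple transposition `s_a = (a, a+1)` in `S_{n+1}`. -/
def sgen {n : ℕ} (a : Fin n) : Equiv.Perm (Fin (n + 1)) :=
  Equiv.swap a.castSucc a.succ

/-- `φ_w(α) = Σ_{i<j, w(i)>w(j)} (α_i - α_j)`. -/
def phiW {P : Type*} [CommRing P] {n : ℕ} (w : Equiv.Perm (Fin (n + 1)))
    (α : Fin (n + 1) → P) : P :=
  ∑ p ∈ Finset.univ.filter
      (fun p : Fin (n + 1) × Fin (n + 1) => p.1 < p.2 ∧ w p.2 < w p.1),
    (α p.1 - α p.2)

/-- Coefficient vector of `ρ h`: the coefficient of `x_k` is `-(k+1)·h`. -/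
def rhoH {P : Type*} [CommRing P] {n : ℕ} (h : P) : Fin (n + 1) → P :=
  fun k => -(((k : ℕ) + 1 : ℕ) : P) * h

/-- Evolution of the type (x-coefficient vector, scalar part) of a pure function of
initial type `q_x + ρ h + q_μ` (with `q_x = Σ α_i x_i` and scalar part `t0 = q_μ`)
under successive application of the normalized admissible operators `C̄_{i_k}^{ν_k}`:
the word is processed from the right. An unnormalized admissible step at letter `a`
sends the coefficient vector `c` to `c ∘ s_a + (e_{a} - e_{a+1})·h` and the
normalization subtracts `ν·h = (c_a - c_{a+1} - h)·h` from the scalar part. -/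
def typeEvol {P : Type*} [CommRing P] {n : ℕ} (h : P) (α : Fin (n + 1) → P) (t0 : P) :
    List (Fin n) → (Fin (n + 1) → P) × P
  | [] => (fun k => α k + rhoH h k, t0)
  | a :: rest =>
      let c := (typeEvol h α t0 rest).1
      ((fun k => c (sgen a k)) + (Pi.single a.castSucc h - Pi.single a.succ h),
        (typeEvol h α t0 rest).2 - ((c a.castSucc - c a.succ) - h) * h)

/-- Swapping the adjacent values `a` and `a+1` preserves strict order, except on
the pair `(a, a+1)` itself. -/
lemma swap_lt_iff {n : ℕ} (a : Fin n) (x y : Fin (n + 1))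
    (h1 : ¬(x = a.castSucc ∧ y = a.succ)) (h2 : ¬(x = a.succ ∧ y = a.castSucc)) :
    Equiv.swap a.castSucc a.succ x < Equiv.swap a.castSucc a.succ y ↔ x < y := by
  have hv : ∀ u v : Fin (n+1), u ≠ v → (u:ℕ) ≠ (v:ℕ) := fun u v h hh => h (Fin.ext hh)
  rcases eq_or_ne x a.castSucc with rfl | hx1
  · rcases eq_or_ne y a.castSucc with rfl | hy1
    · simp
    · rcases eq_or_ne y a.succ with rfl | hy2
      · exact absurd ⟨rfl, rfl⟩ h1
      · rw [Equiv.swap_apply_left, Equiv.swap_apply_of_ne_of_ne hy1 hy2]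
        have := hv _ _ hy1; have := hv _ _ hy2
        simp only [Fin.lt_def, Fin.val_succ, Fin.coe_castSucc] at *
        omega
  · rcases eq_or_ne x a.succ with rfl | hx2
    · rcases eq_or_ne y a.castSucc with rfl | hy1
      · exact absurd ⟨rfl, rfl⟩ h2
      · rcases eq_or_ne y a.succ with rfl | hy2
        · simp
        · rw [Equiv.swap_apply_right, Equiv.swap_apply_of_ne_of_ne hy1 hy2]
          have := hv _ _ hy1; have := hv _ _ hy2
          simp only [Fin.lt_def, Fin.val_succ, Fin.coe_castSucc] at *
          omega
    · rw [Equiv.swap_apply_of_ne_of_ne hx1 hx2]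
      rcases eq_or_ne y a.castSucc with rfl | hy1
      · rw [Equiv.swap_apply_left]
        have := hv _ _ hx1; have := hv _ _ hx2
        simp only [Fin.lt_def, Fin.val_succ, Fin.coe_castSucc] at *
        omega
      · rcases eq_or_ne y a.succ with rfl | hy2
        · rw [Equiv.swap_apply_right]
          have := hv _ _ hx1; have := hv _ _ hx2
          simp only [Fin.lt_def, Fin.val_succ, Fin.coe_castSucc] at *
          omega
        · rw [Equiv.swap_apply_of_ne_of_ne hy1 hy2]

lemma phiW_one {P : Type*} [CommRing P] {n : ℕ} (α : Fin (n + 1) → P) :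
    phiW 1 α = 0 := by
  unfold phiW
  convert Finset.sum_empty
  ext p
  simp only [Equiv.Perm.one_apply, mem_filter, mem_univ, true_and, notMem_empty, iff_false]
  intro hp
  obtain ⟨-, h1, h2⟩ := Finset.mem_filter.mp hp
  exact absurd h1 (not_lt.mpr h2.le)

/-- The cocycle identity: `φ_{s_a w}(α) = φ_w(α) + α(w⁻¹ a) - α(w⁻¹ (a+1))`. -/
lemma phiW_sgen_mul {P : Type*} [CommRing P] {n : ℕ} (a : Fin n)
    (w : Equiv.Perm (Fin (n + 1))) (α : Fin (n + 1) → P) :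
    phiW (sgen a * w) α = phiW w α + α (w⁻¹ a.castSucc) - α (w⁻¹ a.succ) := by
  classical
  set S : Finset (Fin (n+1) × Fin (n+1)) :=
    Finset.univ.filter (fun p => p.1 < p.2) with hS
  have expand : ∀ v : Equiv.Perm (Fin (n+1)), phiW v α =
      ∑ p ∈ S, if v p.2 < v p.1 then α p.1 - α p.2 else 0 := by
    intro v
    rw [phiW, ← Finset.sum_filter, hS, Finset.filter_filter]
  set i := w⁻¹ a.castSucc with hi
  set j := w⁻¹ a.succ with hj
  have hcs : a.castSucc < a.succ := Fin.castSucc_lt_succ (i := a)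
  have hwi : w i = a.castSucc := w.apply_symm_apply _
  have hwj : w j = a.succ := w.apply_symm_apply _
  have hij : i ≠ j := by
    intro h
    exact hcs.ne (by rw [← hwi, ← hwj, h])
  have happ : ∀ p : Fin (n+1), (sgen a * w) p = Equiv.swap a.castSucc a.succ (w p) :=
    fun p => rfl
  rw [expand, expand]
  have hsum : ∑ p ∈ S,
      ((if (sgen a * w) p.2 < (sgen a * w) p.1 then α p.1 - α p.2 else 0)
        - (if w p.2 < w p.1 then α p.1 - α p.2 else 0))
      = α i - α j := by
    rcases lt_or_gt_of_ne hij with hlt | hgt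
    · rw [Finset.sum_eq_single_of_mem (i, j)]
      · rw [happ, happ, hwi, hwj, Equiv.swap_apply_left, Equiv.swap_apply_right,
          if_pos hcs, if_neg (by exact fun hc => absurd hc (not_lt.mpr hcs.le))]
        ring
      · simp [hS, hlt]
      · rintro ⟨b1, b2⟩ hb hne
        have hb12 : b1 < b2 := by simpa [hS] using hb
        have hA : ¬(w b2 = a.castSucc ∧ w b1 = a.succ) := by
          rintro ⟨hb2, hb1⟩
          have : b2 = i := w.injective (by rw [hb2, hwi])
          have : b1 = j := w.injective (by rw [hb1, hwj])
          omega
        have hB : ¬(w b2 = a.succ ∧ w b1 = a.castSucc) := by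
          rintro ⟨hb2, hb1⟩
          have e2 : b2 = j := w.injective (by rw [hb2, hwj])
          have e1 : b1 = i := w.injective (by rw [hb1, hwi])
          exact hne (by rw [e1, e2])
        simp only [happ, swap_lt_iff a (w b2) (w b1) hA hB, sub_self]
    · rw [Finset.sum_eq_single_of_mem (j, i)]
      · rw [happ, happ, hwi, hwj, Equiv.swap_apply_left, Equiv.swap_apply_right,
          if_neg (by exact fun hc => absurd hc (not_lt.mpr hcs.le)), if_pos hcs]
        ring
      · simp [hS, hgt]
      · rintro ⟨b1, b2⟩ hb hne
        have hb12 : b1 < b2 := by simpa [hS] using hb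
        have hA : ¬(w b2 = a.castSucc ∧ w b1 = a.succ) := by
          rintro ⟨hb2, hb1⟩
          have e2 : b2 = i := w.injective (by rw [hb2, hwi])
          have e1 : b1 = j := w.injective (by rw [hb1, hwj])
          exact hne (by rw [e1, e2])
        have hB : ¬(w b2 = a.succ ∧ w b1 = a.castSucc) := by
          rintro ⟨hb2, hb1⟩
          have : b2 = j := w.injective (by rw [hb2, hwj])
          have : b1 = i := w.injective (by rw [hb1, hwi])
          omega
        simp only [happ, swap_lt_iff a (w b2) (w b1) hA hB, sub_self]
  rw [Finset.sum_sub_distrib] at hsum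
  linear_combination hsum

/-- The resulting type equals `w(q_x) + ρ h + q_μ - φ_w(q_x)·h`, where
`w = s_{i_1}⋯s_{i_ℓ}` is the permutation of the word; in particular it depends only
on the permutation `w`, not on the chosen word. -/
theorem typeEvol_eq {P : Type*} [CommRing P] {n : ℕ} (h : P)
    (α : Fin (n + 1) → P) (t0 : P) (ws : List (Fin n)) :
    typeEvol h α t0 ws =
      (fun k => α (((ws.map sgen).prod)⁻¹ k) + rhoH h k,
        t0 - phiW ((ws.map sgen).prod) α * h) := by
  induction ws with
  | nil =>
      simp [typeEvol, phiW_one]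
  | cons a rest ih =>
      have hprod : (((a :: rest).map sgen).prod : Equiv.Perm (Fin (n+1)))
          = sgen a * (rest.map sgen).prod := by
        simp [List.map_cons, List.prod_cons]
      set w : Equiv.Perm (Fin (n+1)) := (rest.map sgen).prod with hw
      have hc : (typeEvol h α t0 rest).1 = fun k => α (w⁻¹ k) + rhoH h k :=
        congrArg Prod.fst ih
      have ht : (typeEvol h α t0 rest).2 = t0 - phiW w α * h :=
        congrArg Prod.snd ih
      have hswapinv : (sgen a * w)⁻¹ = w⁻¹ * sgen a := by
        rw [mul_inv_rev]
        congr 1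
      refine Prod.ext ?_ ?_
      · show (fun k => (typeEvol h α t0 rest).1 (sgen a k))
            + (Pi.single a.castSucc h - Pi.single a.succ h) = _
        funext k
        simp only [hprod, hc, Pi.add_apply, Pi.sub_apply, hswapinv,
          Equiv.Perm.mul_apply]
        have hrho : rhoH h (sgen a k) + ((Pi.single a.castSucc h : Fin (n+1) → P) k
            - (Pi.single a.succ h : Fin (n+1) → P) k) = rhoH h k := by
          have hne : (a.castSucc : Fin (n+1)) ≠ a.succ := (Fin.castSucc_lt_succ (i := a)).ne
          rcases eq_or_ne k a.castSucc with rfl | hk1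
          · rw [show sgen a a.castSucc = a.succ from Equiv.swap_apply_left _ _,
              Pi.single_apply, Pi.single_apply, if_pos rfl, if_neg hne]
            simp only [rhoH, Fin.val_succ, Fin.coe_castSucc]
            push_cast
            ring
          · rcases eq_or_ne k a.succ with rfl | hk2
            · rw [show sgen a a.succ = a.castSucc from Equiv.swap_apply_right _ _,
                Pi.single_apply, Pi.single_apply, if_pos rfl, if_neg hne.symm]
              simp only [rhoH, Fin.val_succ, Fin.coe_castSucc]
              push_cast
              ring
            · rw [show sgen a k = k from Equiv.swap_apply_of_ne_of_ne hk1 hk2,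
                Pi.single_apply, Pi.single_apply, if_neg hk1, if_neg hk2]
              ring
        linear_combination hrho
      · show (typeEvol h α t0 rest).2
            - (((typeEvol h α t0 rest).1 a.castSucc - (typeEvol h α t0 rest).1 a.succ) - h) * h
            = _
        rw [ht, hc, hprod, phiW_sgen_mul]
        have hrho2 : rhoH h (a.castSucc : Fin (n+1)) - rhoH h a.succ = h := by
          simp only [rhoH, Fin.val_succ, Fin.coe_castSucc]
          push_cast
          ring
        linear_combination (-h) * hrho2
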